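/- Let k be a field, G a finite group whose order is invertible in k, and R the formal power series ring k[[z_1, …, z_d]] with maximal ideal m. Suppose G acts on R on the right by k-algebra automorphisms g* (so (gh)* = h* ∘ g*). Let α : G → GL_d(k) be a group homomorphism and let u_1, …, u_d ∈ m be elements whose residue classes form a basis of m/m², and suppose that for every g ∈ G and every j, g*(u_j) ≡ Σ_{l=1}^d α(g)_{jl} · u_l modulo m². Then there exist elements v_1, …, v_d ∈ m with v_i ≡ u_i modulo m² for all i (in particular, the residue classes of the v_i again form a basis of m/m²) such that the action of G on the v_i is exactly linear: g*(v_i) = Σ_{j=1}^d α(g)_{ij} · v_j for all g ∈ G and all i. -/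

import Mathlib

/-!
Average the family `u` over `G`, untwisting each translate by `α`:
`v = |G|⁻¹ ∑_g α(g⁻¹) · g*(u)`, with matrices acting on families `ι → V` by
`(A • w) i = ∑ j, A i j • w j`. Reindexing `g ↦ g h` shows `h*(v) = α(h) · v`, and since
`α(g⁻¹) · g*(u) ≡ u` modulo `m²` term by term, also `v ≡ u` modulo `m²`.
-/

open Matrix.Module

section TwistedAverage

variable {k V G ι : Type*} [CommRing k] [AddCommGroup V] [Module k V] [Group G] [Fintype G]
  [Fintype ι] [DecidableEq ι] [Invertible (Fintype.card G : k)]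

noncomputable def twistedAverage (act : G → V →ₗ[k] V) (α : G →* GL ι k) (u : ι → V) : ι → V :=
  ⅟(Fintype.card G : k) • ∑ g : G, (α g⁻¹ : Matrix ι ι k) • (act g ∘ u)

theorem comp_twistedAverage {act : G → V →ₗ[k] V}
    (h_mul : ∀ g h x, act (g * h) x = act h (act g x)) (α : G →* GL ι k) (u : ι → V) (h : G) :
    act h ∘ twistedAverage act α u = (α h : Matrix ι ι k) • twistedAverage act α u := by
  have hmat (g : G) : (α g⁻¹ : Matrix ι ι k) = (α h : Matrix ι ι k) * α (g * h)⁻¹ := by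
    rw [← Units.val_mul, ← map_mul, mul_inv_rev, mul_inv_cancel_left]
  calc act h ∘ twistedAverage act α u
      = ⅟(Fintype.card G : k) • ∑ g : G, (α g⁻¹ : Matrix ι ι k) • (act (g * h) ∘ u) := by
        ext i
        simp only [twistedAverage, Function.comp_apply, Pi.smul_apply, Finset.sum_apply,
          Matrix.Module.smul_apply, map_smul, map_sum, h_mul]
    _ = ⅟(Fintype.card G : k) •
          ∑ g : G, (α h : Matrix ι ι k) • (α (g * h)⁻¹ : Matrix ι ι k) • (act (g * h) ∘ u) := by
        simp only [← mul_smul, ← hmat]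
    _ = (α h : Matrix ι ι k) • twistedAverage act α u := by
        rw [twistedAverage, ← Finset.smul_sum, smul_comm]
        congr 2
        exact Equiv.sum_comp (Equiv.mulRight h) fun g => (α g⁻¹ : Matrix ι ι k) • (act g ∘ u)

theorem matrix_smul_mem_pi (N : Submodule k V) (A : Matrix ι ι k) {w : ι → V}
    (hw : w ∈ Submodule.pi Set.univ fun _ => N) : A • w ∈ Submodule.pi Set.univ fun _ => N :=
  Submodule.mem_pi.2 fun _ _ => N.sum_mem fun j _ => N.smul_mem _ (hw j trivial)

theorem twistedAverage_sub_mem {act : G → V →ₗ[k] V} {α : G →* GL ι k} {u : ι → V}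
    (N : Submodule k V)
    (hu : ∀ g, act g ∘ u - (α g : Matrix ι ι k) • u ∈ Submodule.pi Set.univ fun _ => N) :
    twistedAverage act α u - u ∈ Submodule.pi Set.univ fun _ => N := by
  have hterm (g : G) : (α g⁻¹ : Matrix ι ι k) • (act g ∘ u) - u =
      (α g⁻¹ : Matrix ι ι k) • (act g ∘ u - (α g : Matrix ι ι k) • u) := by
    rw [smul_sub, ← mul_smul, ← Units.val_mul, ← map_mul, inv_mul_cancel, map_one, Units.val_one,
      one_smul]
  have hmean : ⅟(Fintype.card G : k) • ∑ _g : G, u = u := by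
    rw [Finset.sum_const, Finset.card_univ, ← Nat.cast_smul_eq_nsmul k, smul_smul, invOf_mul_self,
      one_smul]
  rw [twistedAverage]
  nth_rewrite 2 [← hmean]
  rw [← smul_sub, ← Finset.sum_sub_distrib]
  simp only [hterm]
  exact Submodule.smul_mem _ _ (Submodule.sum_mem _ fun g _ => matrix_smul_mem_pi N _ (hu g))

end TwistedAverage

theorem finite_group_action_linearizable_general
    {k : Type*} [Field k] {G : Type*} [Group G] [Fintype G]
    (hcard : (Fintype.card G : k) ≠ 0)
    {d : ℕ}
    (act : G → (MvPowerSeries (Fin d) k ≃ₐ[k] MvPowerSeries (Fin d) k))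
    (h_mul : ∀ g h : G, act (g * h) = (act g).trans (act h))
    (α : G →* Matrix.GeneralLinearGroup (Fin d) k)
    (m : Ideal (MvPowerSeries (Fin d) k))
    (u : Fin d → MvPowerSeries (Fin d) k)
    (hu : ∀ j : Fin d, u j ∈ m)
    (hlin : ∀ (g : G) (j : Fin d),
      act g (u j) - ∑ l : Fin d, ((α g : Matrix (Fin d) (Fin d) k) j l) • u l ∈ m ^ 2) :
    ∃ v : Fin d → MvPowerSeries (Fin d) k,
      (∀ i : Fin d, v i ∈ m) ∧
      (∀ i : Fin d, v i - u i ∈ m ^ 2) ∧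
      (∀ (g : G) (i : Fin d),
        act g (v i) = ∑ j : Fin d, ((α g : Matrix (Fin d) (Fin d) k) i j) • v j) := by
  have : Invertible (Fintype.card G : k) := invertibleOfNonzero hcard
  set v := twistedAverage (fun g => (act g).toLinearMap) α u
  have hvu : ∀ i, v i - u i ∈ m ^ 2 := fun i =>
    Submodule.mem_pi.1 (twistedAverage_sub_mem ((m ^ 2).restrictScalars k)
      fun g => Submodule.mem_pi.2 fun j _ => hlin g j) i trivial
  refine ⟨v, fun i => ?_, hvu, fun g i => ?_⟩
  · simpa using m.add_mem (Ideal.pow_le_self two_ne_zero (hvu i)) (hu i)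
  · exact congr_fun (comp_twistedAverage (act := fun g => (act g).toLinearMap)
      (fun g h x => by rw [h_mul]; rfl) α u g) i

/-- **Linearization of a finite group action in formal coordinates** (equation (4) of the
paper).  Let `k` be a field, `G` a finite group with `|G|` invertible in `k`, and
`R = k[[z_1, …, z_d]]` with maximal ideal `m = ker(constantCoeff)`.  Suppose `G` acts on
`R` on the right by `k`-algebra automorphisms (`(gh)* = h* ∘ g*`, `e* = id`).  Let
`u 1, …, u d ∈ m` have residue classes forming a basis of `m/m²` (expressed below by the
spanning condition `hspan` and the independence condition `hindep`), and suppose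
`g*(u j) ≡ ∑_l α(g)ⱼₗ • u l mod m²` for all `g, j`.  Then there exist `v 1, …, v d ∈ m`
with `v i ≡ u i mod m²` (so their residue classes again form a basis of `m/m²`) on which
the action of `G` is exactly linear: `g*(v i) = ∑_j α(g)ᵢⱼ • v j`. -/
theorem finite_group_action_linearizable
    {k : Type*} [Field k] {G : Type*} [Group G] [Fintype G]
    (hcard : (Fintype.card G : k) ≠ 0)
    {d : ℕ}
    (act : G → (MvPowerSeries (Fin d) k ≃ₐ[k] MvPowerSeries (Fin d) k))
    (h_one : act 1 = AlgEquiv.refl)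
    (h_mul : ∀ g h : G, act (g * h) = (act g).trans (act h))
    (α : G →* Matrix.GeneralLinearGroup (Fin d) k)
    (m : Ideal (MvPowerSeries (Fin d) k))
    (hm : m = RingHom.ker (MvPowerSeries.constantCoeff : MvPowerSeries (Fin d) k →+* k))
    (u : Fin d → MvPowerSeries (Fin d) k)
    (hu : ∀ j : Fin d, u j ∈ m)
    -- the residue classes of the `u i` span `m/m²` …
    (hspan : ∀ x ∈ m, ∃ c : Fin d → k, x - ∑ i : Fin d, c i • u i ∈ m ^ 2)
    -- … and are linearly independent in `m/m²`
    (hindep : ∀ c : Fin d → k, (∑ i : Fin d, c i • u i ∈ m ^ 2) → c = 0)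
    (hlin : ∀ (g : G) (j : Fin d),
      act g (u j) - ∑ l : Fin d, ((α g : Matrix (Fin d) (Fin d) k) j l) • u l ∈ m ^ 2) :
    ∃ v : Fin d → MvPowerSeries (Fin d) k,
      (∀ i : Fin d, v i ∈ m) ∧
      (∀ i : Fin d, v i - u i ∈ m ^ 2) ∧
      (∀ (g : G) (i : Fin d),
        act g (v i) = ∑ j : Fin d, ((α g : Matrix (Fin d) (Fin d) k) i j) • v j) :=
  finite_group_action_linearizable_general hcard act h_mul α m u hu hlin
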